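/- arXiv:quant-ph/9903014 — 9 statements merged into one kernel-verified Lean document; each statement's English description precedes it below -/
import Mathlib

section
/- Let U be a unitary matrix. For any ε > 0 there exists an integer n > 0 such that for all vectors x with ‖x‖² ≤ 1, ‖(I - Uⁿ)x‖² < ε. -/
/-!
The powers of `U` lie in the unitary group, which is compact, so two of them, `U ^ k` and
`U ^ l` with `k < l`, are close in operator norm. Left multiplication by the unitary `U ^ k` is
an isometry, hence `U ^ (l - k)` is just as close to `1`, and the operator norm of
`1 - U ^ (l - k)` bounds `‖(1 - U ^ (l - k)) x‖` on the unit ball.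
-/

theorem exists_pow_dist_one_lt {M : Type*} [Monoid M] [PseudoMetricSpace M] [IsIsometricSMul M M]
    [CompactSpace M] (g : M) {ε : ℝ} (hε : 0 < ε) : ∃ n, 0 < n ∧ dist (g ^ n) 1 < ε := by
  obtain ⟨_, φ, hφ, hlim⟩ := CompactSpace.tendsto_subseq fun n ↦ g ^ n
  obtain ⟨N, hN⟩ := Metric.cauchySeq_iff'.1 hlim.cauchySeq ε hε
  have hlt : φ N < φ (N + 1) := hφ N.lt_succ_self
  refine ⟨φ (N + 1) - φ N, Nat.sub_pos_of_lt hlt, ?_⟩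
  calc dist (g ^ (φ (N + 1) - φ N)) 1
      = dist (g ^ φ N • g ^ (φ (N + 1) - φ N)) (g ^ φ N • 1) := (dist_smul _ _ _).symm
    _ = dist (g ^ φ (N + 1)) (g ^ φ N) := by
      rw [smul_eq_mul, smul_eq_mul, ← pow_add, Nat.add_sub_cancel' hlt.le, mul_one]
    _ < ε := hN _ N.le_succ

namespace Unitary

variable {E : Type*} [NormedRing E] [StarRing E] [CStarRing E]

instance : IsIsometricSMul (unitary E) (unitary E) :=
  ⟨fun u ↦ Isometry.of_dist_eq fun a b ↦ by
    simp only [smul_eq_mul, Subtype.dist_eq, dist_eq_norm, MulMemClass.coe_mul, ← mul_sub,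
      CStarRing.norm_coe_unitary_mul]⟩

theorem norm_le_one (u : unitary E) : ‖(u : E)‖ ≤ 1 := by
  rcases subsingleton_or_nontrivial E with _ | _
  · simp [Subsingleton.elim (u : E) 0]
  · exact (CStarRing.norm_coe_unitary u).le

theorem isCompact_unitary [ProperSpace E] : IsCompact (unitary E : Set E) :=
  Metric.isCompact_of_isClosed_isBounded isClosed_unitary <|
    (Metric.isBounded_closedBall (x := (0 : E)) (r := 1)).subset fun u hu ↦
      mem_closedBall_zero_iff.2 (norm_le_one ⟨u, hu⟩)

instance [ProperSpace E] : CompactSpace (unitary E) :=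
  isCompact_iff_compactSpace.1 isCompact_unitary

end Unitary

namespace Matrix

open scoped Matrix.Norms.L2Operator

variable {𝕜 n : Type*} [RCLike 𝕜] [Fintype n] [DecidableEq n]

theorem sum_norm_sq_mulVec_le {m : Type*} [Fintype m] (A : Matrix m n 𝕜) (x : n → 𝕜) :
    ∑ i, ‖(A *ᵥ x) i‖ ^ 2 ≤ ‖A‖ ^ 2 * ∑ i, ‖x i‖ ^ 2 := by
  have h := pow_le_pow_left₀ (norm_nonneg _) (A.l2_opNorm_mulVec (WithLp.toLp 2 x)) 2
  rwa [mul_pow, EuclideanSpace.norm_sq_eq, EuclideanSpace.norm_sq_eq] at h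

theorem exists_pow_l2_opNorm_one_sub_lt {U : Matrix n n 𝕜} (hU : U ∈ unitaryGroup n 𝕜)
    {ε : ℝ} (hε : 0 < ε) : ∃ k, 0 < k ∧ ‖1 - U ^ k‖ < ε := by
  have : ProperSpace (Matrix n n 𝕜) := FiniteDimensional.proper_rclike 𝕜 _
  obtain ⟨k, hk, hclose⟩ := exists_pow_dist_one_lt (⟨U, hU⟩ : unitary (Matrix n n 𝕜)) hε
  exact ⟨k, hk, by rwa [norm_sub_rev, ← dist_eq_norm]⟩

end Matrix

/-- For a unitary matrix `U` and any `ε > 0` there is `n > 0` such that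
for all vectors `x` with `‖x‖² ≤ 1` (Euclidean), `‖(I - Uⁿ)x‖² < ε`. -/
theorem unitary_power_close_to_id (m : ℕ) (U : Matrix (Fin m) (Fin m) ℂ)
    (hU : U ∈ Matrix.unitaryGroup (Fin m) ℂ) (ε : ℝ) (hε : 0 < ε) :
    ∃ n : ℕ, 0 < n ∧ ∀ x : Fin m → ℂ, (∑ i, ‖x i‖ ^ 2) ≤ 1 →
      (∑ i, ‖((1 - U ^ n).mulVec x) i‖ ^ 2) < ε := by
  open scoped Matrix.Norms.L2Operator in
  obtain ⟨n, hn, hclose⟩ := Matrix.exists_pow_l2_opNorm_one_sub_lt hU (Real.sqrt_pos.2 hε)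
  refine ⟨n, hn, fun x hx ↦ ?_⟩
  calc _ ≤ ‖1 - U ^ n‖ ^ 2 * ∑ i, ‖x i‖ ^ 2 := Matrix.sum_norm_sq_mulVec_le _ x
    _ ≤ ‖1 - U ^ n‖ ^ 2 := mul_le_of_le_one_right (sq_nonneg _) hx
    _ < √ε ^ 2 := by gcongr
    _ = ε := Real.sq_sqrt hε.le
end

section
/- Let α be an irrational multiple of π and let U_a be the 2×2 rotation matrix by angle α, U_b = U_a⁻¹. For a word x over {a,b}, the product of the corresponding matrices applied to the unit vector e₀ equals e₀ if and only if the number of a's in x equals the number of b's. Consequently, the 2-state measure-once quantum automaton with transition matrices U_a, U_b, initial state e₀ and accepting state e₁ accepts the non-regular language {x ∈ {a,b}* : |x|_a ≠ |x|_b} with cut-point 0. -/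
/-!
The letters act by the commuting rotations `rotMat α` and `rotMat (-α)`, so a word `x` acts as
the rotation by `θ = (|x|_a - |x|_b) α`, which sends `e₀` to `(cos θ, -sin θ)`. The second
coordinate vanishes iff `θ ∈ πℤ`, and `n r ∈ ℤ` forces `n = 0` when `r` is irrational.
-/

/-- Rotation matrix by angle `α`. -/
noncomputable def rotMat (α : ℝ) : Matrix (Fin 2) (Fin 2) ℝ :=
  !![Real.cos α, Real.sin α; -Real.sin α, Real.cos α]

/-- Transition matrix of the 2-state MO-QFA: letter `a` (encoded `true`) rotates by `α`,
letter `b` (encoded `false`) by `-α` (the inverse rotation). -/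
noncomputable def rotStep (α : ℝ) (b : Bool) : Matrix (Fin 2) (Fin 2) ℝ :=
  if b then rotMat α else (rotMat α)⁻¹

/-- The configuration after reading word `x`, starting from `e₀ = (1,0)ᵀ`:
`U(x) e₀ = U_{xₙ} ⋯ U_{x₁} e₀`. -/
noncomputable def rotRun (α : ℝ) (x : List Bool) : Fin 2 → ℝ :=
  x.foldl (fun v b => (rotStep α b).mulVec v) ![1, 0]

open Real Matrix

lemma rotMat_mul_rotMat (α β : ℝ) : rotMat α * rotMat β = rotMat (α + β) := by
  ext i j
  fin_cases i <;> fin_cases j <;>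
    simp [rotMat, cos_add, sin_add] <;> ring

lemma rotMat_zero : rotMat 0 = 1 := by
  simp [rotMat, one_fin_two]

lemma rotMat_inv (α : ℝ) : (rotMat α)⁻¹ = rotMat (-α) :=
  inv_eq_right_inv (by rw [rotMat_mul_rotMat, add_neg_cancel, rotMat_zero])

lemma rotMat_mulVec_single_zero (θ : ℝ) : rotMat θ *ᵥ ![1, 0] = ![cos θ, -sin θ] := by
  ext i
  fin_cases i <;> simp [rotMat]

def countDiff (x : List Bool) : ℤ := x.count true - x.count false

lemma countDiff_cons (b : Bool) (x : List Bool) :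
    countDiff (b :: x) = countDiff x + if b then 1 else -1 := by
  cases b <;> simp [countDiff] <;> ring

lemma countDiff_eq_zero_iff (x : List Bool) :
    countDiff x = 0 ↔ x.count true = x.count false := by
  simp [countDiff, sub_eq_zero]

lemma rotStep_eq (α : ℝ) (b : Bool) : rotStep α b = rotMat (if b then α else -α) := by
  cases b <;> simp [rotStep, rotMat_inv]

lemma foldl_rotStep_mulVec (α : ℝ) (x : List Bool) (v : Fin 2 → ℝ) :
    x.foldl (fun v b => rotStep α b *ᵥ v) v = rotMat (countDiff x * α) *ᵥ v := by
  induction x generalizing v with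
  | nil => simp [countDiff, rotMat_zero]
  | cons b x ih =>
    rw [List.foldl_cons, ih, rotStep_eq, mulVec_mulVec, rotMat_mul_rotMat, countDiff_cons]
    congr 2
    cases b <;> simp <;> ring

lemma rotRun_eq (α : ℝ) (x : List Bool) :
    rotRun α x = ![cos (countDiff x * α), -sin (countDiff x * α)] := by
  rw [rotRun, foldl_rotStep_mulVec, rotMat_mulVec_single_zero]

lemma sin_intCast_mul_eq_zero_iff {r : ℝ} (hr : Irrational r) (n : ℤ) :
    sin (n * (r * π)) = 0 ↔ n = 0 := by
  refine ⟨fun h => by_contra fun hn => ?_, fun h => by simp [h]⟩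
  obtain ⟨k, hk⟩ := sin_eq_zero_iff.mp h
  have hkr : r * n = k := by
    apply mul_right_cancel₀ pi_ne_zero
    linarith
  exact (hr.mul_intCast hn).ne_int k hkr

/-- with `α` an irrational multiple of `π`, `U(x) e₀ = e₀` iff the numbers of
`a`s and `b`s in `x` are equal; consequently the MO-QFA with accepting state `e₁` accepts
the non-regular language `{x : |x|_a ≠ |x|_b}` with cut-point 0 (positive acceptance
probability `|⟨e₁, U(x)e₀⟩|²` exactly on words of the language). -/
theorem moqfa_accepts_unequal_counts_cutpoint_zero (α r : ℝ)
    (hr : Irrational r) (hα : α = r * Real.pi) :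
    ∀ x : List Bool,
      (rotRun α x = ![1, 0] ↔ x.count true = x.count false) ∧
      (0 < (rotRun α x 1) ^ 2 ↔ x.count true ≠ x.count false) := by
  intro x
  have hsin := sin_intCast_mul_eq_zero_iff hr (countDiff x)
  rw [← hα, countDiff_eq_zero_iff] at hsin
  rw [rotRun_eq]
  refine ⟨⟨fun h => hsin.mp ?_, fun h => ?_⟩, ?_⟩
  · simpa using congrFun h 1
  · simp [(countDiff_eq_zero_iff x).mpr h]
  · simpa [sq_pos_iff] using hsin.not
end

section
/- Every language accepted by a measure-once quantum finite automaton with bounded error is accepted by a group finite automaton, and conversely every language accepted by a group finite automaton is accepted by a measure-once quantum finite automaton with certainty. -/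
/-- Configuration of an MO-QFA after reading word `w` from configuration `v`. -/
noncomputable def runVec {n : ℕ} {A : Type} (U : A → Matrix (Fin n) (Fin n) ℂ)
    (v : Fin n → ℂ) (w : List A) : Fin n → ℂ :=
  w.foldl (fun v σ => (U σ).mulVec v) v

/-- Acceptance probability of an MO-QFA with transition matrices `U`, initial state `q0`,
and accepting states `F` on the word `w`: `‖P_F U(w) e_{q0}‖²`. -/
noncomputable def accProb {n : ℕ} {A : Type} (U : A → Matrix (Fin n) (Fin n) ℂ)
    (q0 : Fin n) (F : Finset (Fin n)) (w : List A) : ℝ :=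
  ∑ i ∈ F, ‖runVec U (Pi.single q0 1) w i‖ ^ 2

/-- Extended transition function of a DFA. -/
def dfaEval {Q A : Type} (δ : Q → A → Q) (q : Q) (w : List A) : Q :=
  w.foldl δ q

/-!
After reading `w` an MO-QFA is in a unit vector `ψ w`, and since letters act by unitaries,
`dist (ψ (u ++ z)) (ψ (v ++ z)) = dist (ψ u) (ψ v)`. The acceptance probability is 2-Lipschitz
in the state, so with margin `ε` words whose states are `ε`-close have the same left quotient;
compactness of the unit sphere leaves finitely many left quotients. A letter `a` acts injectively
on them: by compactness some power `a ^ (d + 1)` moves both `ψ u` and `ψ v` by less than `ε`, so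
`u ~ u a ^ (d + 1)` and `v ~ v a ^ (d + 1)`, whence `u a ~ v a` forces `u ~ v`. So the minimal
automaton is a group automaton. Conversely, letting each letter act by the permutation matrix of
its transition turns a group automaton into an MO-QFA accepting with probability 0 or 1.
-/

open Function Matrix WithLp

theorem IsCompact.exists_lt_dist_lt {X : Type*} [PseudoMetricSpace X] {K : Set X}
    (hK : IsCompact K) {s : ℕ → X} (hs : ∀ k, s k ∈ K) {ε : ℝ} (hε : 0 < ε) :
    ∃ i j, i < j ∧ dist (s j) (s i) < ε := by
  obtain ⟨_, -, φ, hφ, hlim⟩ := hK.tendsto_subseq hs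
  obtain ⟨N, hN⟩ := Metric.cauchySeq_iff'.1 hlim.cauchySeq ε hε
  exact ⟨φ N, φ (N + 1), hφ N.lt_succ_self, hN _ N.le_succ⟩

theorem DFA.exists_fin_of_bijective_step {A : Type} {σ : Type*} [Finite σ] (M : DFA A σ)
    (hM : ∀ a, Bijective (M.step · a)) :
    ∃ (m : ℕ) (δ : Fin m → A → Fin m) (q0 : Fin m) (F : Set (Fin m)),
      (∀ a, Bijective fun q => δ q a) ∧ ∀ w, w ∈ M.accepts ↔ dfaEval δ q0 w ∈ F := by
  let g := Finite.equivFin σ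
  refine ⟨_, (M.reindex g).step, (M.reindex g).start, (M.reindex g).accept,
    fun a => g.bijective.comp ((hM a).comp g.symm.bijective), fun w => ?_⟩
  rw [← M.accepts_reindex g]
  rfl

namespace Language

variable {A : Type} {X : Type*} [PseudoMetricSpace X] {L : Language A} {ψ : List A → X} {ε : ℝ}

theorem exists_groupAutomaton_of_finite_range_leftQuotient
    (hfin : (Set.range L.leftQuotient).Finite)
    (hinj : ∀ u v a, L.leftQuotient (u ++ [a]) = L.leftQuotient (v ++ [a]) →
      L.leftQuotient u = L.leftQuotient v) :
    ∃ (m : ℕ) (δ : Fin m → A → Fin m) (q0 : Fin m) (F : Set (Fin m)),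
      (∀ a, Bijective fun q => δ q a) ∧ ∀ w, w ∈ L ↔ dfaEval δ q0 w ∈ F := by
  have := hfin.to_subtype
  have hstep : ∀ a, Injective (L.toDFA.step · a) := by
    rintro a ⟨_, u, rfl⟩ ⟨_, v, rfl⟩ h
    have h' := congrArg Subtype.val h
    simp only [step_toDFA, ← leftQuotient_append] at h'
    exact Subtype.ext (hinj u v a h')
  simpa using L.toDFA.exists_fin_of_bijective_step
    fun a => Finite.injective_iff_bijective.1 (hstep a)

theorem leftQuotient_eq_of_dist_lt
    (hψ : ∀ u v z, dist (ψ (u ++ z)) (ψ (v ++ z)) ≤ dist (ψ u) (ψ v))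
    (hL : ∀ u v, dist (ψ u) (ψ v) < ε → (u ∈ L ↔ v ∈ L)) {u v : List A}
    (h : dist (ψ u) (ψ v) < ε) : L.leftQuotient u = L.leftQuotient v :=
  ext fun z => hL _ _ ((hψ u v z).trans_lt h)

theorem finite_range_leftQuotient {K : Set X} (hK : IsCompact K) (hψK : ∀ w, ψ w ∈ K)
    (hε : 0 < ε) (hψ : ∀ u v z, dist (ψ (u ++ z)) (ψ (v ++ z)) ≤ dist (ψ u) (ψ v))
    (hL : ∀ u v, dist (ψ u) (ψ v) < ε → (u ∈ L ↔ v ∈ L)) :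
    (Set.range L.leftQuotient).Finite := by
  by_contra hinf
  let f := (Set.not_finite.1 hinf).natEmbedding
  choose rep hrep using fun k => (f k).2
  obtain ⟨i, j, hij, hd⟩ := hK.exists_lt_dist_lt (fun k => hψK (rep k)) hε
  have := leftQuotient_eq_of_dist_lt hψ hL hd
  rw [hrep, hrep] at this
  exact hij.ne' (f.injective (Subtype.ext this))

theorem exists_leftQuotient_append_replicate_eq {K : Set X} (hK : IsCompact K)
    (hψK : ∀ w, ψ w ∈ K) (hε : 0 < ε)
    (hψ : ∀ u v z, dist (ψ (u ++ z)) (ψ (v ++ z)) = dist (ψ u) (ψ v))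
    (hL : ∀ u v, dist (ψ u) (ψ v) < ε → (u ∈ L ↔ v ∈ L)) (u v : List A) (a : A) :
    ∃ d, L.leftQuotient (u ++ List.replicate (d + 1) a) = L.leftQuotient u ∧
      L.leftQuotient (v ++ List.replicate (d + 1) a) = L.leftQuotient v := by
  obtain ⟨i, j, hij, hd⟩ := (hK.prod hK).exists_lt_dist_lt
    (s := fun k => (ψ (u ++ List.replicate k a), ψ (v ++ List.replicate k a)))
    (fun k => ⟨hψK _, hψK _⟩) hε
  obtain ⟨d, rfl⟩ : ∃ d, j = d + 1 + i := ⟨j - i - 1, by omega⟩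
  have shift : ∀ x, dist (ψ (x ++ List.replicate (d + 1 + i) a)) (ψ (x ++ List.replicate i a)) =
      dist (ψ (x ++ List.replicate (d + 1) a)) (ψ x) := by
    intro x
    rw [List.replicate_add, ← List.append_assoc]
    exact hψ _ _ _
  rw [Prod.dist_eq, max_lt_iff, shift, shift] at hd
  exact ⟨d, leftQuotient_eq_of_dist_lt (fun u v z => (hψ u v z).le) hL hd.1,
    leftQuotient_eq_of_dist_lt (fun u v z => (hψ u v z).le) hL hd.2⟩

theorem leftQuotient_eq_of_append_singleton {K : Set X} (hK : IsCompact K)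
    (hψK : ∀ w, ψ w ∈ K) (hε : 0 < ε)
    (hψ : ∀ u v z, dist (ψ (u ++ z)) (ψ (v ++ z)) = dist (ψ u) (ψ v))
    (hL : ∀ u v, dist (ψ u) (ψ v) < ε → (u ∈ L ↔ v ∈ L)) {u v : List A} {a : A}
    (h : L.leftQuotient (u ++ [a]) = L.leftQuotient (v ++ [a])) :
    L.leftQuotient u = L.leftQuotient v := by
  obtain ⟨d, hu, hv⟩ := exists_leftQuotient_append_replicate_eq hK hψK hε hψ hL u v a
  rw [← hu, ← hv, List.replicate_succ, ← List.singleton_append, ← List.append_assoc,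
    ← List.append_assoc, leftQuotient_append L (u ++ [a]), leftQuotient_append L (v ++ [a]), h]

theorem exists_groupAutomaton_of_isCompact {K : Set X} (hK : IsCompact K)
    (hψK : ∀ w, ψ w ∈ K) (hε : 0 < ε)
    (hψ : ∀ u v z, dist (ψ (u ++ z)) (ψ (v ++ z)) = dist (ψ u) (ψ v))
    (hL : ∀ u v, dist (ψ u) (ψ v) < ε → (u ∈ L ↔ v ∈ L)) :
    ∃ (m : ℕ) (δ : Fin m → A → Fin m) (q0 : Fin m) (F : Set (Fin m)),
      (∀ a, Bijective fun q => δ q a) ∧ ∀ w, w ∈ L ↔ dfaEval δ q0 w ∈ F :=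
  exists_groupAutomaton_of_finite_range_leftQuotient
    (finite_range_leftQuotient hK hψK hε (fun u v z => (hψ u v z).le) hL)
    fun _ _ _ => leftQuotient_eq_of_append_singleton hK hψK hε hψ hL

end Language

theorem Matrix.norm_toLp_mulVec_of_mem_unitaryGroup {ι 𝕜 : Type*} [Fintype ι] [DecidableEq ι]
    [RCLike 𝕜] {V : Matrix ι ι 𝕜} (hV : V ∈ unitaryGroup ι 𝕜) (x : ι → 𝕜) :
    ‖toLp 2 (V *ᵥ x)‖ = ‖toLp 2 x‖ := by
  rw [← toEuclideanCLM_toLp]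
  exact ContinuousLinearMap.norm_map_of_mem_unitary (Unitary.map_mem toEuclideanCLM hV) _

theorem Matrix.permMatrix_mem_unitaryGroup {ι 𝕜 : Type*} [Fintype ι] [DecidableEq ι]
    [RCLike 𝕜] (τ : Equiv.Perm ι) : τ.permMatrix 𝕜 ∈ unitaryGroup ι 𝕜 := by
  rw [mem_unitaryGroup_iff', star_eq_conjTranspose, conjTranspose_permMatrix, ← permMatrix_mul,
    mul_inv_cancel, permMatrix_one]

theorem EuclideanSpace.abs_sum_norm_sq_sub_le {ι 𝕜 : Type*} [Fintype ι] [RCLike 𝕜]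
    (s : Finset ι) {x y : EuclideanSpace 𝕜 ι} (hx : ‖x‖ ≤ 1) (hy : ‖y‖ ≤ 1) :
    |∑ i ∈ s, ‖x i‖ ^ 2 - ∑ i ∈ s, ‖y i‖ ^ 2| ≤ 2 * dist x y := by
  let R : EuclideanSpace 𝕜 ι → EuclideanSpace 𝕜 s := fun z => toLp 2 (s.restrict z)
  have norm_R_sq : ∀ z, ‖R z‖ ^ 2 = ∑ i ∈ s, ‖z i‖ ^ 2 := fun z => by
    simp [R, EuclideanSpace.norm_sq_eq, Finset.sum_attach s (fun i => ‖z i‖ ^ 2)]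
  have norm_R_le : ∀ z, ‖R z‖ ≤ ‖z‖ := fun z => by
    refine (pow_le_pow_iff_left₀ (norm_nonneg _) (norm_nonneg _) two_ne_zero).1 ?_
    rw [norm_R_sq, EuclideanSpace.norm_sq_eq]
    exact Finset.sum_le_univ_sum_of_nonneg fun i => by positivity
  have hRx := (norm_R_le x).trans hx
  have hRy := (norm_R_le y).trans hy
  have hd := abs_norm_sub_norm_le (R x) (R y)
  have hRsub : ‖R x - R y‖ ≤ ‖x - y‖ := norm_R_le (x - y)
  rw [← norm_R_sq, ← norm_R_sq, dist_eq_norm]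
  rw [abs_le] at hd ⊢
  constructor <;> nlinarith [norm_nonneg (R x), norm_nonneg (R y)]

section runVec

variable {n : ℕ} {A : Type} {U : A → Matrix (Fin n) (Fin n) ℂ}

theorem runVec_append (v : Fin n → ℂ) (u z : List A) :
    runVec U v (u ++ z) = runVec U (runVec U v u) z :=
  List.foldl_append ..

theorem runVec_sub (v v' : Fin n → ℂ) (w : List A) :
    runVec U (v - v') w = runVec U v w - runVec U v' w := by
  induction w generalizing v v' with
  | nil => rfl
  | cons a w ih => exact (congrArg (runVec U · w) (mulVec_sub _ _ _)).trans (ih _ _)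

theorem norm_toLp_runVec (hU : ∀ a, U a ∈ unitaryGroup (Fin n) ℂ) (v : Fin n → ℂ)
    (w : List A) : ‖toLp 2 (runVec U v w)‖ = ‖toLp 2 v‖ := by
  induction w generalizing v with
  | nil => rfl
  | cons a w ih => exact (ih _).trans (norm_toLp_mulVec_of_mem_unitaryGroup (hU a) v)

theorem dist_toLp_runVec (hU : ∀ a, U a ∈ unitaryGroup (Fin n) ℂ) (v v' : Fin n → ℂ)
    (w : List A) : dist (toLp 2 (runVec U v w)) (toLp 2 (runVec U v' w)) =
      dist (toLp 2 v) (toLp 2 v') := by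
  rw [dist_eq_norm, dist_eq_norm, ← toLp_sub, ← toLp_sub, ← runVec_sub, norm_toLp_runVec hU]

end runVec

section MOQFA

variable {n : ℕ} {A : Type} {U : A → Matrix (Fin n) (Fin n) ℂ} {q0 : Fin n}

noncomputable def moqfaState (U : A → Matrix (Fin n) (Fin n) ℂ) (q0 : Fin n) (w : List A) :
    EuclideanSpace ℂ (Fin n) :=
  toLp 2 (runVec U (Pi.single q0 1) w)

theorem norm_moqfaState (hU : ∀ a, U a ∈ unitaryGroup (Fin n) ℂ) (w : List A) :
    ‖moqfaState U q0 w‖ = 1 := by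
  rw [moqfaState, norm_toLp_runVec hU, PiLp.toLp_single, PiLp.norm_single, norm_one]

theorem dist_moqfaState_append (hU : ∀ a, U a ∈ unitaryGroup (Fin n) ℂ) (u v z : List A) :
    dist (moqfaState U q0 (u ++ z)) (moqfaState U q0 (v ++ z)) =
      dist (moqfaState U q0 u) (moqfaState U q0 v) := by
  simp only [moqfaState, runVec_append]
  exact dist_toLp_runVec hU _ _ z

theorem accProb_eq_sum_moqfaState (F : Finset (Fin n)) (w : List A) :
    accProb U q0 F w = ∑ i ∈ F, ‖moqfaState U q0 w i‖ ^ 2 :=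
  rfl

theorem abs_accProb_sub_le (hU : ∀ a, U a ∈ unitaryGroup (Fin n) ℂ) (F : Finset (Fin n))
    (u v : List A) : |accProb U q0 F u - accProb U q0 F v| ≤
      2 * dist (moqfaState U q0 u) (moqfaState U q0 v) := by
  rw [accProb_eq_sum_moqfaState, accProb_eq_sum_moqfaState]
  exact EuclideanSpace.abs_sum_norm_sq_sub_le F (norm_moqfaState hU u).le (norm_moqfaState hU v).le

theorem mem_iff_mem_of_abs_sub_lt {L : Set (List A)} {p : List A → ℝ} {lam ε : ℝ}
    (hL : ∀ w, w ∈ L → lam + ε < p w) (hnL : ∀ w, w ∉ L → p w < lam - ε) {u v : List A}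
    (h : |p u - p v| < 2 * ε) : u ∈ L ↔ v ∈ L := by
  rw [abs_lt] at h
  constructor <;> intro hw <;> by_contra hw'
  · linarith [hL u hw, hnL v hw']
  · linarith [hL v hw, hnL u hw']

theorem exists_groupAutomaton_of_boundedError {L : Set (List A)} {F : Finset (Fin n)}
    {lam ε : ℝ} (hU : ∀ a, U a ∈ unitaryGroup (Fin n) ℂ) (hε : 0 < ε)
    (hL : ∀ w, w ∈ L → lam + ε < accProb U q0 F w)
    (hnL : ∀ w, w ∉ L → accProb U q0 F w < lam - ε) :
    ∃ (m : ℕ) (δ : Fin m → A → Fin m) (q0 : Fin m) (F : Set (Fin m)),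
      (∀ a, Bijective fun q => δ q a) ∧ ∀ w, w ∈ L ↔ dfaEval δ q0 w ∈ F :=
  Language.exists_groupAutomaton_of_isCompact (isCompact_sphere 0 1)
    (fun w => mem_sphere_zero_iff_norm.2 (norm_moqfaState hU w)) hε
    (dist_moqfaState_append hU) fun u v huv =>
      mem_iff_mem_of_abs_sub_lt hL hnL ((abs_accProb_sub_le hU F u v).trans_lt (by linarith))

-- `τ.permMatrix ℂ *ᵥ v = v ∘ τ`, so the matrix sending `e q` to `e (τ q)` is that of `τ⁻¹`.
theorem runVec_permMatrix_single (τ : A → Equiv.Perm (Fin n)) (q : Fin n) (w : List A) :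
    runVec (fun a => (τ a)⁻¹.permMatrix ℂ) (Pi.single q 1) w =
      Pi.single (dfaEval (fun q a => τ a q) q w) 1 := by
  induction w generalizing q with
  | nil => rfl
  | cons a w ih =>
    have hstep : (τ a)⁻¹.permMatrix ℂ *ᵥ Pi.single q 1 = Pi.single (τ a q) 1 := by
      ext i
      simp [Pi.single_apply, Equiv.symm_apply_eq]
    exact (congrArg (runVec _ · w) hstep).trans (ih _)

theorem accProb_permMatrix (τ : A → Equiv.Perm (Fin n)) (F : Finset (Fin n)) (w : List A) :
    accProb (fun a => (τ a)⁻¹.permMatrix ℂ) q0 F w =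
      if dfaEval (fun q a => τ a q) q0 w ∈ F then 1 else 0 := by
  simp [accProb, runVec_permMatrix_single, Pi.single_apply, apply_ite]

theorem exists_moqfa_of_groupAutomaton {L : Set (List A)} {m : ℕ} {δ : Fin m → A → Fin m}
    {q0 : Fin m} {F : Set (Fin m)} (hδ : ∀ a, Bijective fun q => δ q a)
    (hL : ∀ w, w ∈ L ↔ dfaEval δ q0 w ∈ F) :
    ∃ (n : ℕ) (U : A → Matrix (Fin n) (Fin n) ℂ) (q0 : Fin n) (F : Finset (Fin n)),
      (∀ a, U a ∈ unitaryGroup (Fin n) ℂ) ∧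
      (∀ w, w ∈ L → accProb U q0 F w = 1) ∧ (∀ w, w ∉ L → accProb U q0 F w = 0) := by
  classical
  let τ : A → Equiv.Perm (Fin m) := fun a => Equiv.ofBijective _ (hδ a)
  refine ⟨m, fun a => (τ a)⁻¹.permMatrix ℂ, q0, F.toFinset,
    fun a => permMatrix_mem_unitaryGroup _, fun w hw => ?_, fun w hw => ?_⟩ <;>
    simp [accProb_permMatrix, τ, ← hL, hw]

end MOQFA

/-- a language accepted by a measure-once QFA with bounded error
(cut-point `lam`, margin `ε > 0`) is accepted by a group finite automaton
(a DFA in which every letter acts as a permutation of the states); conversely any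
language accepted by a group finite automaton is accepted by an MO-QFA with certainty
(probability 1 on the language, 0 off it). -/
theorem moqfa_boundedError_iff_groupAutomaton {A : Type} (L : Set (List A)) :
    ((∃ (n : ℕ) (U : A → Matrix (Fin n) (Fin n) ℂ) (q0 : Fin n) (F : Finset (Fin n))
        (lam ε : ℝ),
        (∀ σ, U σ ∈ Matrix.unitaryGroup (Fin n) ℂ) ∧ 0 < ε ∧
        (∀ w, w ∈ L → lam + ε < accProb U q0 F w) ∧
        (∀ w, w ∉ L → accProb U q0 F w < lam - ε)) →
      ∃ (m : ℕ) (δ : Fin m → A → Fin m) (q0 : Fin m) (F : Set (Fin m)),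
        (∀ σ, Function.Bijective fun q => δ q σ) ∧
        (∀ w, w ∈ L ↔ dfaEval δ q0 w ∈ F))
    ∧
    ((∃ (m : ℕ) (δ : Fin m → A → Fin m) (q0 : Fin m) (F : Set (Fin m)),
        (∀ σ, Function.Bijective fun q => δ q σ) ∧
        (∀ w, w ∈ L ↔ dfaEval δ q0 w ∈ F)) →
      ∃ (n : ℕ) (U : A → Matrix (Fin n) (Fin n) ℂ) (q0 : Fin n) (F : Finset (Fin n)),
        (∀ σ, U σ ∈ Matrix.unitaryGroup (Fin n) ℂ) ∧
        (∀ w, w ∈ L → accProb U q0 F w = 1) ∧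
        (∀ w, w ∉ L → accProb U q0 F w = 0)) := by
  constructor
  · rintro ⟨n, U, q0, F, lam, ε, hU, hε, hL, hnL⟩
    exact exists_groupAutomaton_of_boundedError hU hε hL hnL
  · rintro ⟨m, δ, q0, F, hδ, hL⟩
    exact exists_moqfa_of_groupAutomaton hδ hL
end

section
/- The transition function of a group finite automaton yields, for each letter, a permutation matrix, which is unitary; hence the induced measure-once quantum finite automaton accepts the same language with probability 1 on words in the language and 0 otherwise. -/
/-- The permutation matrix of the action of letter `σ` of a group finite automaton. -/
def permMat {m : ℕ} {A : Type} (δ : Fin m → A → Fin m) (σ : A) :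
    Matrix (Fin m) (Fin m) ℂ :=
  Matrix.of fun i j => if δ j σ = i then 1 else 0

lemma permMat_mulVec_single {m : ℕ} {A : Type} (δ : Fin m → A → Fin m) (σ : A) (q : Fin m) :
    (permMat δ σ).mulVec (Pi.single q 1) = Pi.single (δ q σ) 1 := by
  funext i
  simp only [Matrix.mulVec, dotProduct, permMat, Matrix.of_apply]
  rw [Finset.sum_eq_single q]
  · by_cases h : δ q σ = i <;> simp [h, Pi.single_apply]
  · intro b _ hb; simp [Pi.single_apply, hb]
  · simp

lemma runVec_single {m : ℕ} {A : Type} (δ : Fin m → A → Fin m) (q : Fin m) (w : List A) :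
    runVec (permMat δ) (Pi.single q 1) w = Pi.single (dfaEval δ q w) 1 := by
  induction w generalizing q with
  | nil => rfl
  | cons a w ih =>
    simp only [runVec, dfaEval, List.foldl_cons] at *
    rw [permMat_mulVec_single]
    exact ih _

/-- for a group finite automaton (each letter acting bijectively on states),
each letter's permutation matrix is unitary, and the induced MO-QFA accepts each word of
the automaton's language with probability 1 and each other word with probability 0. -/
theorem gfa_permMatrices_unitary_and_exact {A : Type} (m : ℕ)
    (δ : Fin m → A → Fin m) (q0 : Fin m) (F : Finset (Fin m))
    (hbij : ∀ σ, Function.Bijective fun q => δ q σ) :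
    (∀ σ, permMat δ σ ∈ Matrix.unitaryGroup (Fin m) ℂ) ∧
    (∀ w : List A,
      accProb (permMat δ) q0 F w = if dfaEval δ q0 w ∈ F then 1 else 0) := by
  constructor
  · intro σ
    rw [Matrix.mem_unitaryGroup_iff']
    ext i j
    simp only [Matrix.mul_apply, Matrix.star_apply, permMat, Matrix.of_apply,
      Matrix.one_apply]
    rw [Finset.sum_eq_single (δ i σ)]
    · by_cases h : i = j
      · simp [h]
      · have : ¬ δ j σ = δ i σ := fun hc => h ((hbij σ).1 hc).symm
        simp [h, this]
    · intro b _ hb; simp [Ne.symm hb]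
    · simp
  · intro w
    unfold accProb
    rw [runVec_single]
    by_cases h : dfaEval δ q0 w ∈ F
    · rw [if_pos h, Finset.sum_eq_single (dfaEval δ q0 w)]
      · simp
      · intro b _ hb; simp [Pi.single_apply, Ne.symm hb]
      · intro hn; exact absurd h hn
    · rw [if_neg h]
      apply Finset.sum_eq_zero
      intro i hi
      have : dfaEval δ q0 w ≠ i := fun hc => h (hc ▸ hi)
      simp [Pi.single_apply, this.symm]
end

section
/- The class of languages accepted by measure-many QFAs with bounded error is not closed under homomorphisms: the language {a,b}*c is accepted by a reversible finite automaton (hence by an MM-QFA with bounded error), but its image under the homomorphism h(a)=a, h(b)=b, h(c)=b is {a,b}*b, which is not accepted by any MM-QFA with bounded error. -/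
/-- Reversible finite automaton condition: each letter has at most one `σ`-predecessor
per state, except that a state with two distinct `σ`-predecessors must be a spin state
(all transitions from it loop). -/
def IsRFA {Q A : Type} (δ : Q → A → Q) : Prop :=
  ∀ (σ : A) (q1 q2 : Q), q1 ≠ q2 → δ q1 σ = δ q2 σ →
    ∀ τ : A, δ (δ q1 σ) τ = δ q1 σ

/-- The language `{a,b}*c` over the alphabet `{a, b, c} = {0, 1, 2}`. -/
def Lc : Set (List (Fin 3)) :=
  {w | ∃ u : List (Fin 3), (∀ s ∈ u, s = 0 ∨ s = 1) ∧ w = u ++ [2]}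

/-- The language `{a,b}*b` over the alphabet `{a, b, c} = {0, 1, 2}`. -/
def Lb : Set (List (Fin 3)) :=
  {w | ∃ u : List (Fin 3), (∀ s ∈ u, s = 0 ∨ s = 1) ∧ w = u ++ [1]}

/-- The homomorphism `h(a) = a`, `h(b) = b`, `h(c) = b`, extended letterwise. -/
def hmap (w : List (Fin 3)) : List (Fin 3) :=
  w.map fun s => if s = 2 then 1 else s

theorem dfaEval_append_singleton {Q A : Type} (δ : Q → A → Q) (q : Q) (w : List A) (a : A) :
    dfaEval δ q (w ++ [a]) = δ (dfaEval δ q w) a :=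
  List.foldl_append

/-- State `0` reads `{a,b}*`, state `1` accepts right after `c`, state `2` is the spin sink. -/
def lcTransition (q σ : Fin 3) : Fin 3 :=
  if q = 0 then (if σ = 2 then 1 else 0) else 2

theorem isRFA_lcTransition : IsRFA lcTransition := by
  unfold IsRFA; decide

theorem dfaEval_lcTransition_eq_zero_iff (u : List (Fin 3)) :
    dfaEval lcTransition 0 u = 0 ↔ ∀ s ∈ u, s = 0 ∨ s = 1 := by
  have step : ∀ q s : Fin 3, lcTransition q s = 0 ↔ q = 0 ∧ (s = 0 ∨ s = 1) := by decide
  induction u using List.reverseRecOn with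
  | nil => simp [dfaEval]
  | append_singleton u s ih =>
    simp only [dfaEval_append_singleton, step, ih, List.mem_append, List.mem_singleton, or_imp,
      forall_and, forall_eq]

theorem mem_Lc_iff_dfaEval_lcTransition (w : List (Fin 3)) :
    w ∈ Lc ↔ dfaEval lcTransition 0 w = 1 := by
  have step : ∀ q s : Fin 3, lcTransition q s = 1 ↔ q = 0 ∧ s = 2 := by decide
  induction w using List.reverseRecOn with
  | nil => simp [Lc, dfaEval]
  | append_singleton u s =>
    rw [dfaEval_append_singleton, step, dfaEval_lcTransition_eq_zero_iff]
    simp [Lc, and_comm]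

theorem hmap_of_forall_mem {u : List (Fin 3)} (hu : ∀ s ∈ u, s = 0 ∨ s = 1) : hmap u = u := by
  refine (List.map_congr_left fun s hs => ?_).trans (List.map_id' u)
  rcases hu s hs with rfl | rfl <;> rfl

theorem hmap_image_Lc : hmap '' Lc = Lb := by
  have hmap_append_c {u : List (Fin 3)} (hu : ∀ s ∈ u, s = 0 ∨ s = 1) :
      hmap (u ++ [2]) = u ++ [1] := by
    rw [hmap, List.map_append, ← hmap, hmap_of_forall_mem hu]; rfl
  ext w
  constructor
  · rintro ⟨_, ⟨u, hu, rfl⟩, rfl⟩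
    exact ⟨u, hu, hmap_append_c hu⟩
  · rintro ⟨u, hu, rfl⟩
    exact ⟨u ++ [2], ⟨u, hu, rfl⟩, hmap_append_c hu⟩

/-- `RMM` (languages accepted by measure-many QFAs with bounded error) is
not closed under homomorphisms: `{a,b}*c` is accepted by a reversible finite automaton
(hence is in `RMM` by Ambainis–Freivalds), but its homomorphic image under
`h(a)=a, h(b)=b, h(c)=b` is `{a,b}*b`, which is not in `RMM` (Kondacs–Watrous). -/
theorem rmm_not_closed_under_homomorphism
    (RMM : Set (List (Fin 3)) → Prop)
    (hRFA : ∀ (m : ℕ) (δ : Fin m → Fin 3 → Fin m) (q0 : Fin m) (F : Finset (Fin m)),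
      IsRFA δ → RMM {w | dfaEval δ q0 w ∈ F})
    (hLb : ¬ RMM Lb) :
    (∃ (m : ℕ) (δ : Fin m → Fin 3 → Fin m) (q0 : Fin m) (F : Finset (Fin m)),
        IsRFA δ ∧ ∀ w, w ∈ Lc ↔ dfaEval δ q0 w ∈ F) ∧
    hmap '' Lc = Lb ∧
    ¬ (∀ L : Set (List (Fin 3)), RMM L → RMM (hmap '' L)) := by
  have hLc : Lc = {w | dfaEval lcTransition 0 w ∈ ({1} : Finset (Fin 3))} := by
    ext w
    simpa using mem_Lc_iff_dfaEval_lcTransition w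
  refine ⟨⟨3, lcTransition, 0, {1}, isRFA_lcTransition, fun w => hLc ▸ Iff.rfl⟩,
    hmap_image_Lc, fun hclosed => hLb ?_⟩
  have hRMM_Lc : RMM Lc := hLc ▸ hRFA 3 lcTransition 0 {1} isRFA_lcTransition
  exact hmap_image_Lc ▸ hclosed Lc hRMM_Lc
end

section
/- If the minimal DFA of a regular language L contains two distinguishable states q₁ ≠ q₂ and nonempty strings x, y with δ(q₁,x) = δ(q₂,x) = q₂ and δ(q₂,y) = q₁ (i.e., L violates the partial order condition), then, assuming RMM is closed under inverse homomorphisms and left/right quotients and that {a,b}*b ∉ RMM, L is not accepted by any measure-many QFA with bounded error. -/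
/-- Two states are distinguishable if some string sends exactly one of them into `F`. -/
def Disting {Q A : Type} (δ : Q → A → Q) (F : Set Q) (q1 q2 : Q) : Prop :=
  ∃ z : List A, ¬ (dfaEval δ q1 z ∈ F ↔ dfaEval δ q2 z ∈ F)

/-- The language `{a,b}*b` over the two-letter alphabet `Bool` (with `b = true`). -/
def LbBool : Set (List Bool) := {w | ∃ u : List Bool, w = u ++ [true]}

def IsResetHom {Q A : Type} (δ : Q → A → Q) (p p' : Q) (h : Bool → List A) : Prop :=
  ∀ q ∈ ({p, p'} : Set Q), ∀ c, dfaEval δ q (h c) = cond c p' p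

lemma dfaEval_append {Q A : Type} (δ : Q → A → Q) (q : Q) (u v : List A) :
    dfaEval δ q (u ++ v) = dfaEval δ (dfaEval δ q u) v :=
  List.foldl_append

lemma nil_notMem_LbBool : [] ∉ LbBool := by
  rintro ⟨u, hu⟩
  simp at hu

lemma append_singleton_mem_LbBool_iff (u : List Bool) (c : Bool) :
    u ++ [c] ∈ LbBool ↔ c = true := by
  refine ⟨fun ⟨v, hv⟩ => (List.append_singleton_inj.mp hv).2, ?_⟩
  rintro rfl
  exact ⟨u, rfl⟩

section Reset

variable {Q A : Type} {δ : Q → A → Q} {p p' : Q} {h : Bool → List A}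

open scoped Classical in
lemma IsResetHom.dfaEval_flatMap (hh : IsResetHom δ p p' h) (w : List Bool) :
    dfaEval δ p (w.flatMap h) = if w ∈ LbBool then p' else p := by
  induction w using List.reverseRecOn with
  | nil => simp [dfaEval, nil_notMem_LbBool]
  | append_singleton u c ih =>
    have hmem : (if u ∈ LbBool then p' else p) ∈ ({p, p'} : Set Q) := by
      split_ifs <;> simp
    rw [List.flatMap_append, dfaEval_append, ih, List.flatMap_singleton, hh _ hmem,
      append_singleton_mem_LbBool_iff]
    cases c <;> simp

lemma IsResetHom.preimage_quotient_eq_LbBool (hh : IsResetHom δ p p' h) {L : Set (List A)}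
    {q0 : Q} {F : Set Q} (hacc : ∀ w, w ∈ L ↔ dfaEval δ q0 w ∈ F) {s z : List A}
    (hs : dfaEval δ q0 s = p) (hz : dfaEval δ p z ∉ F) (hz' : dfaEval δ p' z ∈ F) :
    {w : List Bool | s ++ w.flatMap h ++ z ∈ L} = LbBool := by
  ext w
  simp only [Set.mem_ofPred_eq, hacc, dfaEval_append, hs, hh.dfaEval_flatMap]
  split_ifs with hw <;> simp [hw, hz, hz']

end Reset

lemma exists_isResetHom_of_cycle {Q A : Type} {δ : Q → A → Q} {F : Set Q} {q1 q2 : Q}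
    {x y z : List A} (h1 : dfaEval δ q1 x = q2) (h2 : dfaEval δ q2 x = q2)
    (h3 : dfaEval δ q2 y = q1) (hz : ¬ (dfaEval δ q1 z ∈ F ↔ dfaEval δ q2 z ∈ F)) :
    ∃ (p p' : Q) (u : List A) (h : Bool → List A), dfaEval δ q1 u = p ∧
      IsResetHom δ p p' h ∧ dfaEval δ p z ∉ F ∧ dfaEval δ p' z ∈ F := by
  have hxy1 : dfaEval δ q1 (x ++ y) = q1 := by rw [dfaEval_append, h1, h3]
  have hxy2 : dfaEval δ q2 (x ++ y) = q1 := by rw [dfaEval_append, h2, h3]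
  by_cases hz1 : dfaEval δ q1 z ∈ F
  · refine ⟨q2, q1, x, fun c => cond c (x ++ y) x, h1, ?_, by tauto, hz1⟩
    rintro q (rfl | rfl) (_ | _) <;> simp [h1, h2, hxy1, hxy2]
  · refine ⟨q1, q2, [], fun c => cond c x (x ++ y), rfl, ?_, hz1, by tauto⟩
    rintro q (rfl | rfl) (_ | _) <;> simp [h1, h2, hxy1, hxy2]

theorem violating_partial_order_not_in_RMM_general {A : Type}
    (RMM : (B : Type) → Set (List B) → Prop)
    (hinv : ∀ (B C : Type) (h : C → List B) (L : Set (List B)),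
      RMM B L → RMM C {w | w.flatMap h ∈ L})
    (hquot : ∀ (B : Type) (L : Set (List B)) (s z : List B),
      RMM B L → RMM B {w | s ++ w ++ z ∈ L})
    (hLb : ¬ RMM Bool LbBool)
    (L : Set (List A)) (n : ℕ) (δ : Fin n → A → Fin n) (q0 : Fin n) (F : Set (Fin n))
    (hacc : ∀ w, w ∈ L ↔ dfaEval δ q0 w ∈ F)
    (hreach : ∀ q : Fin n, ∃ s : List A, dfaEval δ q0 s = q)
    (q1 q2 : Fin n) (x y : List A)
    (hdist : Disting δ F q1 q2)
    (h1 : dfaEval δ q1 x = q2) (h2 : dfaEval δ q2 x = q2) (h3 : dfaEval δ q2 y = q1) :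
    ¬ RMM A L := by
  intro hL
  obtain ⟨z, hz⟩ := hdist
  obtain ⟨s, hs⟩ := hreach q1
  obtain ⟨p, p', u, h, hu, hh, hzp, hzp'⟩ := exists_isResetHom_of_cycle h1 h2 h3 hz
  have hsu : dfaEval δ q0 (s ++ u) = p := by rw [dfaEval_append, hs, hu]
  apply hLb
  rw [← hh.preimage_quotient_eq_LbBool hacc hsu hzp hzp']
  exact hinv A Bool h _ (hquot A L (s ++ u) z hL)

/-- if a DFA for `L` with all states reachable (such as the minimal DFA)
violates the partial order condition — i.e. it has distinguishable states `q1 ≠ q2` and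
nonempty strings `x, y` with `δ(q1,x) = δ(q2,x) = q2` and `δ(q2,y) = q1` — then,
assuming `RMM` is closed under inverse homomorphisms and under left/right quotients
and that `{a,b}*b ∉ RMM`, the language `L` is not in `RMM`. -/
theorem violating_partial_order_not_in_RMM {A : Type}
    (RMM : (B : Type) → Set (List B) → Prop)
    (hinv : ∀ (B C : Type) (h : C → List B) (L : Set (List B)),
      RMM B L → RMM C {w | w.flatMap h ∈ L})
    (hquot : ∀ (B : Type) (L : Set (List B)) (s z : List B),
      RMM B L → RMM B {w | s ++ w ++ z ∈ L})
    (hLb : ¬ RMM Bool LbBool)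
    (L : Set (List A)) (n : ℕ) (δ : Fin n → A → Fin n) (q0 : Fin n) (F : Set (Fin n))
    (hacc : ∀ w, w ∈ L ↔ dfaEval δ q0 w ∈ F)
    (hreach : ∀ q : Fin n, ∃ s : List A, dfaEval δ q0 s = q)
    (q1 q2 : Fin n) (x y : List A)
    (hq : q1 ≠ q2) (hdist : Disting δ F q1 q2) (hx : x ≠ []) (hy : y ≠ [])
    (h1 : dfaEval δ q1 x = q2) (h2 : dfaEval δ q2 x = q2) (h3 : dfaEval δ q2 y = q1) :
    ¬ RMM A L :=
  violating_partial_order_not_in_RMM_general RMM hinv hquot hLb L n δ q0 F hacc hreach q1 q2 x y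
    hdist h1 h2 h3
end

section
/- The product DFA of two DFAs each satisfying the partial order condition also satisfies the partial order condition. -/
/-- The partial order condition for a DFA. -/
def POC {Q A : Type} (δ : Q → A → Q) (F : Set Q) : Prop :=
  ¬ ∃ (q1 q2 : Q) (x y : List A), q1 ≠ q2 ∧ Disting δ F q1 q2 ∧ x ≠ [] ∧ y ≠ [] ∧
      dfaEval δ q1 x = q2 ∧ dfaEval δ q2 x = q2 ∧ dfaEval δ q2 y = q1

lemma prodEval {Q' Q'' A : Type} (δ' : Q' → A → Q') (δ'' : Q'' → A → Q'') :
    ∀ (w : List A) (p : Q') (q : Q''),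
      dfaEval (fun (p : Q' × Q'') (σ : A) => (δ' p.1 σ, δ'' p.2 σ)) (p, q) w
        = (dfaEval δ' p w, dfaEval δ'' q w) := by
  intro w
  induction w with
  | nil => intro p q; rfl
  | cons a w ih => intro p q; simpa [dfaEval] using ih (δ' p a) (δ'' q a)

/-- the product DFA (componentwise transitions, accepting set `F′ × F″`)
of two DFAs satisfying the partial order condition also satisfies it. -/
theorem product_dfa_preserves_partial_order {Q' Q'' A : Type}
    (δ' : Q' → A → Q') (F' : Set Q') (δ'' : Q'' → A → Q'') (F'' : Set Q'')
    (h' : POC δ' F') (h'' : POC δ'' F'') :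
    POC (fun (p : Q' × Q'') (σ : A) => (δ' p.1 σ, δ'' p.2 σ))
      {p : Q' × Q'' | p.1 ∈ F' ∧ p.2 ∈ F''} := by
  rintro ⟨⟨p1, p2⟩, ⟨q1, q2⟩, x, y, hne, ⟨z, hz⟩, hx, hy, h1, h2, h3⟩
  rw [prodEval, Prod.mk.injEq] at h1 h2 h3
  rw [prodEval, prodEval] at hz
  simp only [Set.mem_setOf_eq] at hz
  by_cases hb : (dfaEval δ'' p2 z ∈ F'' ↔ dfaEval δ'' q2 z ∈ F'')
  · -- first components must be distinguishable
    have ha : ¬ (dfaEval δ' p1 z ∈ F' ↔ dfaEval δ' q1 z ∈ F') := by tauto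
    have hne1 : p1 ≠ q1 := by rintro rfl; exact ha Iff.rfl
    exact h' ⟨p1, q1, x, y, hne1, ⟨z, ha⟩, hx, hy, h1.1, h2.1, h3.1⟩
  · have hne2 : p2 ≠ q2 := by rintro rfl; exact hb Iff.rfl
    exact h'' ⟨p2, q2, x, y, hne2, ⟨z, hb⟩, hx, hy, h1.2, h2.2, h3.2⟩
end

section
/- Let p, p′ : Σ* → [0,1] with p(x) ≥ λ+ε on L, p(x) ≤ λ−ε off L, p′(x) ≥ λ′+ε′ on L′, p′(x) ≤ λ′−ε′ off L′, where 0 < λ−ε < λ+ε ≤ 1 and 0 < λ′−ε′ < λ′+ε′ ≤ 1. Then there exist positive integers s, t such that the function q(x) = (p(x)^s + p′(x)^t)/2 separates L ∪ L′ from its complement with a positive margin: inf over x ∈ L∪L′ of q(x) exceeds sup over x ∉ L∪L′ of q(x). -/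
/-!
Write `a < b` and `a' < b'` for the two pairs of thresholds; after shrinking `b, b'` we may
assume they are `< 1`. The separation comes from exponents `s, t` with
`a ^ s + a' ^ t < min (b ^ s) (b' ^ t)`. Take `s` large and then `t` with
`b' * b ^ s ≤ b' ^ t < b ^ s`, so that both powers of the upper thresholds are comparable:
then `a ^ s = (a / b) ^ s * b ^ s` and `a' ^ t ≤ (a' / b') ^ t * b ^ s` are both below
`b' / 2 * b ^ s` (taking `s` large also forces `t` large), so their sum is below
`b' * b ^ s ≤ b' ^ t`.
-/

open Filter

theorem exists_pow_add_pow_lt_min_of_lt_one {a b a' b' : ℝ}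
    (ha : 0 < a) (hab : a < b) (hb : b < 1) (ha' : 0 < a') (hab' : a' < b') (hb' : b' < 1) :
    ∃ s t : ℕ, 0 < s ∧ 0 < t ∧ a ^ s + a' ^ t < min (b ^ s) (b' ^ t) := by
  have hb0 : 0 < b := ha.trans hab
  have hb0' : 0 < b' := ha'.trans hab'
  have hr : a / b < 1 := (div_lt_one hb0).2 hab
  have hr' : a' / b' < 1 := (div_lt_one hb0').2 hab'
  obtain ⟨T, hT⟩ := exists_pow_lt_of_lt_one (half_pos hb0') hr'
  have hsmall : ∀ {x : ℝ}, 0 ≤ x → x < 1 → ∀ y > 0, ∀ᶠ n : ℕ in atTop, x ^ n < y :=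
    fun hx0 hx1 y hy => (tendsto_pow_atTop_nhds_zero_of_lt_one hx0 hx1).eventually (gt_mem_nhds hy)
  obtain ⟨s, hs, hrs, hbs⟩ := ((eventually_ge_atTop 1).and
    ((hsmall (div_pos ha hb0).le hr _ (half_pos hb0')).and
      (hsmall hb0.le hb _ (pow_pos hb0' T)))).exists
  obtain ⟨n, hlt, hle⟩ :=
    exists_nat_pow_near_of_lt_one (pow_pos hb0 s) (pow_le_one₀ hb0.le hb.le) hb0' hb'
  have hTn : T ≤ n + 1 := ((pow_lt_pow_iff_right_of_lt_one₀ hb0' hb').1 (hlt.trans hbs)).le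
  have hbst : b' * b ^ s ≤ b' ^ (n + 1) := by
    rw [pow_succ']
    exact mul_le_mul_of_nonneg_left hle hb0'.le
  have has : a ^ s < b' / 2 * b ^ s := by
    rw [← div_mul_cancel₀ a hb0.ne', mul_pow]
    exact mul_lt_mul_of_pos_right hrs (pow_pos hb0 s)
  have has' : a' ^ (n + 1) < b' / 2 * b ^ s :=
    calc a' ^ (n + 1) = (a' / b') ^ (n + 1) * b' ^ (n + 1) := by
          rw [← mul_pow, div_mul_cancel₀ a' hb0'.ne']
      _ ≤ (a' / b') ^ T * b ^ s :=
          mul_le_mul (pow_le_pow_of_le_one (div_pos ha' hb0').le hr'.le hTn) hlt.le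
            (pow_pos hb0' _).le (pow_nonneg (div_pos ha' hb0').le T)
      _ < b' / 2 * b ^ s := mul_lt_mul_of_pos_right hT (pow_pos hb0 s)
  refine ⟨s, n + 1, hs, n.succ_pos, lt_min ?_ ?_⟩ <;> linarith

theorem exists_pow_add_pow_lt_min {a b a' b' : ℝ}
    (ha : 0 < a) (hab : a < b) (hb : b ≤ 1) (ha' : 0 < a') (hab' : a' < b') (hb' : b' ≤ 1) :
    ∃ s t : ℕ, 0 < s ∧ 0 < t ∧ a ^ s + a' ^ t < min (b ^ s) (b' ^ t) := by
  obtain ⟨B, haB, hBb⟩ := exists_between hab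
  obtain ⟨B', haB', hBb'⟩ := exists_between hab'
  obtain ⟨s, t, hs, ht, hgap⟩ := exists_pow_add_pow_lt_min_of_lt_one ha haB (hBb.trans_le hb)
    ha' haB' (hBb'.trans_le hb')
  refine ⟨s, t, hs, ht, hgap.trans_le (min_le_min ?_ ?_)⟩
  · exact pow_le_pow_left₀ (ha.trans haB).le hBb.le s
  · exact pow_le_pow_left₀ (ha'.trans haB').le hBb'.le t

/-- running tensor powers of two bounded-error acceptors in parallel
(with amplitude 1/√2 each) accepts the union with a positive margin: there are positive
integers `s, t` such that `q(x) = (p(x)^s + p′(x)^t)/2` separates `L ∪ L′` from its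
complement (the infimum over the union exceeds the supremum over the complement). -/
theorem union_of_bounded_error_languages {A : Type} (L L' : Set (List A))
    (p p' : List A → ℝ) (lam eps lam' eps' : ℝ)
    (hp : ∀ x, 0 ≤ p x ∧ p x ≤ 1) (hp' : ∀ x, 0 ≤ p' x ∧ p' x ≤ 1)
    (h1 : 0 < lam - eps) (h2 : lam - eps < lam + eps) (h3 : lam + eps ≤ 1)
    (h1' : 0 < lam' - eps') (h2' : lam' - eps' < lam' + eps') (h3' : lam' + eps' ≤ 1)
    (hIn : ∀ x ∈ L, lam + eps ≤ p x) (hOut : ∀ x ∉ L, p x ≤ lam - eps)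
    (hIn' : ∀ x ∈ L', lam' + eps' ≤ p' x) (hOut' : ∀ x ∉ L', p' x ≤ lam' - eps') :
    ∃ s t : ℕ, 0 < s ∧ 0 < t ∧ ∃ c d : ℝ, d < c ∧
      (∀ x ∈ L ∪ L', c ≤ (p x ^ s + p' x ^ t) / 2) ∧
      (∀ x ∉ L ∪ L', (p x ^ s + p' x ^ t) / 2 ≤ d) := by
  obtain ⟨s, t, hs, ht, hgap⟩ := exists_pow_add_pow_lt_min h1 h2 h3 h1' h2' h3'
  refine ⟨s, t, hs, ht, min ((lam + eps) ^ s) ((lam' + eps') ^ t) / 2,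
    ((lam - eps) ^ s + (lam' - eps') ^ t) / 2, by linarith, ?_, ?_⟩
  · rintro x (hx | hx)
    · have hps := pow_le_pow_left₀ (h1.trans h2).le (hIn x hx) s
      have := min_le_left ((lam + eps) ^ s) ((lam' + eps') ^ t)
      linarith [pow_nonneg (hp' x).1 t]
    · have hpt := pow_le_pow_left₀ (h1'.trans h2').le (hIn' x hx) t
      have := min_le_right ((lam + eps) ^ s) ((lam' + eps') ^ t)
      linarith [pow_nonneg (hp x).1 s]
  · intro x hx
    rw [Set.mem_union, not_or] at hx
    linarith [pow_le_pow_left₀ (hp x).1 (hOut x hx.1) s,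
      pow_le_pow_left₀ (hp' x).1 (hOut' x hx.2) t]
end

section
/- Let p, p′ : Σ* → [0,1] where p separates L with cut-point λ, margin ε, and p′ satisfies p′(x) ≥ λ′+ε′ on L′ and p′(x) = 0 off L′ (positive one-sided error), with p′ ≤ λ′+η′ ≤ 1 and 0 < λ−ε < λ+ε. Then there exists n such that q(x) = p(x)ⁿ·p′(x) separates L ∩ L′ with a positive margin: q(x) ≥ (λ+ε)ⁿ(λ′+ε′) for x ∈ L∩L′, q(x) ≤ (λ−ε)ⁿ(λ′+η′) for x ∈ L̄∩L′, q(x) = 0 for x ∉ L′, and (λ−ε)ⁿ(λ′+η′) < (λ+ε)ⁿ(λ′+ε′). -/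
/-- intersecting a bounded-error acceptor `p` for `L` with a
positive-one-sided-error acceptor `p′` for `L′` via a tensor power: there is `n` with
`q(x) = p(x)ⁿ · p′(x)` satisfying `q ≥ (lam+eps)ⁿ(lam'+eps')` on `L ∩ L′`,
`q ≤ (lam−eps)ⁿ(lam'+eta')` on `L̄ ∩ L′`, `q = 0` off `L′`, and
`(lam−eps)ⁿ(lam'+eta') < (lam+eps)ⁿ(lam'+eps')`. -/
theorem intersection_with_one_sided_error {A : Type} (L L' : Set (List A))
    (p p' : List A → ℝ) (lam eps lam' eps' eta' : ℝ)
    (hp0 : ∀ x, 0 ≤ p x) (hp'0 : ∀ x, 0 ≤ p' x)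
    (hIn : ∀ x ∈ L, lam + eps ≤ p x) (hOut : ∀ x ∉ L, p x ≤ lam - eps)
    (hIn' : ∀ x ∈ L', lam' + eps' ≤ p' x) (hOut' : ∀ x ∉ L', p' x = 0)
    (hub' : ∀ x, p' x ≤ lam' + eta') (hub1 : lam' + eta' ≤ 1)
    (h1 : 0 < lam - eps) (h2 : lam - eps < lam + eps) (h3 : 0 < lam' + eps') :
    ∃ n : ℕ, 0 < n ∧
      (∀ x ∈ L ∩ L', (lam + eps) ^ n * (lam' + eps') ≤ p x ^ n * p' x) ∧
      (∀ x ∈ Lᶜ ∩ L', p x ^ n * p' x ≤ (lam - eps) ^ n * (lam' + eta')) ∧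
      (∀ x ∉ L', p x ^ n * p' x = 0) ∧
      (lam - eps) ^ n * (lam' + eta') < (lam + eps) ^ n * (lam' + eps') := by
  have hpos : (0:ℝ) < lam + eps := h1.trans h2
  have heta0 : 0 ≤ lam' + eta' := le_trans (hp'0 []) (hub' [])
  set r : ℝ := (lam - eps) / (lam + eps) with hr
  have hr0 : 0 ≤ r := div_nonneg h1.le hpos.le
  have hr1 : r < 1 := (div_lt_one hpos).mpr h2
  obtain ⟨m, hm⟩ := exists_pow_lt_of_lt_one h3 hr1
  refine ⟨max m 1, Nat.lt_of_lt_of_le Nat.one_pos (le_max_right _ _), ?_, ?_, ?_, ?_⟩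
  · rintro x ⟨hx, hx'⟩
    exact mul_le_mul (pow_le_pow_left₀ hpos.le (hIn x hx) _) (hIn' x hx') h3.le
      (pow_nonneg (hp0 x) _)
  · rintro x ⟨hx, hx'⟩
    exact mul_le_mul (pow_le_pow_left₀ (hp0 x) (hOut x hx) _) (hub' x) (hp'0 x)
      (pow_nonneg h1.le _)
  · intro x hx
    rw [hOut' x hx, mul_zero]
  · have hrm : r ^ max m 1 < lam' + eps' :=
      lt_of_le_of_lt (pow_le_pow_of_le_one hr0 hr1.le (le_max_left m 1)) hm
    have h4 : (lam - eps) ^ max m 1 * (lam' + eta') ≤ (lam - eps) ^ max m 1 * 1 :=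
      mul_le_mul_of_nonneg_left hub1 (pow_nonneg h1.le _)
    have h5 : (lam - eps) ^ max m 1 < (lam + eps) ^ max m 1 * (lam' + eps') := by
      have := (div_lt_iff₀ (pow_pos hpos _)).mp (by
        rwa [hr, div_pow] at hrm)
      linarith [this]
    calc (lam - eps) ^ max m 1 * (lam' + eta') ≤ (lam - eps) ^ max m 1 * 1 := h4
      _ = (lam - eps) ^ max m 1 := mul_one _
      _ < (lam + eps) ^ max m 1 * (lam' + eps') := h5
end
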